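/- arXiv:2003.09493 — 7 statements merged into one kernel-verified Lean document; each statement's English description precedes it below -/
import Mathlib

section
/- Let X ⊆ ℝ^q, let f : X → ℝ^p be regression functions, let t : X → ℝ, and fix t* ∈ t(X). Set X̃ = {x ∈ X : t(x) = t*}, let f̃ : X̃ → ℝ^m have linearly independent component functions, and suppose there exists a matrix C ∈ ℝ^{p×m} of full column rank with f(x) = C·f̃(x) for all x ∈ X̃. Let ξ be a design on X with ξ(X̃) > 0, and let ξ̃ be the conditional design on X̃ defined by ξ̃({x}) = ξ({x})/ξ(X̃) for x ∈ X̃. If ξ is admissible for f among all designs on X, then ξ̃ is admissible for f̃ among all designs on X̃. -/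
open Matrix Set

noncomputable section

/-- A (finitely supported) approximate design on a design space `X`. -/
def IsDesign {α : Type*} (X : Set α) (ξ : α → ℝ) : Prop :=
  (Function.support ξ).Finite ∧ (∀ x, 0 ≤ ξ x) ∧
    Function.support ξ ⊆ X ∧ ∑ᶠ x, ξ x = 1

/-- The information matrix of a design `ξ` for regression functions `f`. -/
def infoMatrix {α ι : Type*} [Fintype ι] (f : α → ι → ℝ) (ξ : α → ℝ) :
    Matrix ι ι ℝ :=
  ∑ᶠ x, ξ x • Matrix.vecMulVec (f x) (f x)

/-- An information function: positively homogeneous, superadditive, nonnegative,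
non-constant and upper semicontinuous on the nonnegative definite matrices. -/
def IsInfoFun {ι : Type*} [Fintype ι] (φ : Matrix ι ι ℝ → ℝ) : Prop :=
  (∀ M : Matrix ι ι ℝ, M.PosSemidef → 0 ≤ φ M) ∧
  (∀ c : ℝ, 0 < c → ∀ M : Matrix ι ι ℝ, M.PosSemidef → φ (c • M) = c * φ M) ∧
  (∀ M N : Matrix ι ι ℝ, M.PosSemidef → N.PosSemidef → φ M + φ N ≤ φ (M + N)) ∧
  (∃ M N : Matrix ι ι ℝ, M.PosSemidef ∧ N.PosSemidef ∧ φ M ≠ φ N) ∧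
  UpperSemicontinuousOn φ {M : Matrix ι ι ℝ | M.PosSemidef}

/-- A `φ`-optimal design. -/
def IsOptimalDesign {α ι : Type*} [Fintype ι] (X : Set α) (f : α → ι → ℝ)
    (φ : Matrix ι ι ℝ → ℝ) (ξ : α → ℝ) : Prop :=
  IsDesign X ξ ∧ ∀ η, IsDesign X η → φ (infoMatrix f η) ≤ φ (infoMatrix f ξ)

/-- Admissibility of a design in the Loewner ordering. -/
def IsAdmissible {α ι : Type*} [Fintype ι] (X : Set α) (f : α → ι → ℝ) (ξ : α → ℝ) : Prop :=
  IsDesign X ξ ∧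
    ¬ ∃ η, IsDesign X η ∧ (infoMatrix f η - infoMatrix f ξ).PosSemidef ∧
      infoMatrix f η ≠ infoMatrix f ξ

/-- The smallest eigenvalue of a matrix. -/
def lamMin {ι : Type*} [Fintype ι] (M : Matrix ι ι ℝ) : ℝ :=
  sInf {r : ℝ | ∃ v : ι → ℝ, v ≠ 0 ∧ M *ᵥ v = r • v}

/-! A competitor `η` to the conditional design `ξ̃` on `X̃` lifts to the design
`ξ + ξ(X̃) • (η - ξ̃)` on `X`, which agrees with `ξ` off `X̃` and with `ξ(X̃) • η` on `X̃`.
Because `f = C f̃` on `X̃`, its information matrix exceeds `M(ξ)` by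
`C (ξ(X̃) • (M_f̃(η) - M_f̃(ξ̃))) Cᵀ`, which is nonnegative definite, and nonzero since `C` has full
column rank; this contradicts the admissibility of `ξ`. -/

theorem Function.support_smul_sub_subset {α R M : Type*} [AddGroup M] [SMulZeroClass R M]
    (c : R) (η ζ : α → M) :
    Function.support (c • (η - ζ)) ⊆ Function.support η ∪ Function.support ζ :=
  (Function.support_smul_subset_right _ _).trans (Function.support_sub _ _)

namespace Matrix

variable {l m n R : Type*} [Fintype n]

theorem mul_mul_transpose_eq_vecMulVec [CommSemiring R] (C : Matrix m n R) (v : n → R) :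
    C * vecMulVec v v * Cᵀ = vecMulVec (C *ᵥ v) (C *ᵥ v) := by
  rw [mul_vecMulVec, vecMulVec_mul, vecMul_transpose]

theorem mulVec_injective_of_rank_eq_card [Field R] {C : Matrix m n R}
    (hC : C.rank = Fintype.card n) : Function.Injective C.mulVec := by
  have h := LinearMap.finrank_range_add_finrank_ker C.mulVecLin
  rw [Module.finrank_fintype_fun_eq_card, ← rank, hC, add_eq_left,
    Submodule.finrank_eq_zero, ker_mulVecLin_eq_bot_iff] at h
  exact fun v w hvw => sub_eq_zero.mp (h _ (by rw [mulVec_sub, hvw, sub_self]))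

theorem eq_zero_of_mul_eq_zero [CommSemiring R] {C : Matrix m n R}
    (hC : Function.Injective C.mulVec) {M : Matrix n l R} (h : C * M = 0) : M = 0 := by
  ext i j
  have hcol : C *ᵥ (fun k => M k j) = C *ᵥ 0 := by
    ext i'
    simpa [mulVec, dotProduct, mul_apply] using congrFun (congrFun h i') j
  exact congrFun (hC hcol) i

theorem eq_zero_of_mul_mul_transpose_eq_zero [CommSemiring R] {C : Matrix m n R}
    (hC : Function.Injective C.mulVec) {D : Matrix n n R} (h : C * D * Cᵀ = 0) : D = 0 := by
  have hDCt : D * Cᵀ = 0 := eq_zero_of_mul_eq_zero hC (by rwa [← Matrix.mul_assoc])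
  have hCDt : C * Dᵀ = 0 := by rw [← transpose_transpose C, ← transpose_mul, hDCt, transpose_zero]
  exact transpose_eq_zero.mp (eq_zero_of_mul_eq_zero hC hCDt)

end Matrix

section Designs

variable {α ι κ : Type*} [Fintype ι] [Fintype κ]

theorem infoMatrix_eq_sum (f : α → ι → ℝ) {ξ : α → ℝ} {s : Finset α}
    (hs : Function.support ξ ⊆ s) :
    infoMatrix f ξ = ∑ x ∈ s, ξ x • vecMulVec (f x) (f x) :=
  finsum_eq_sum_of_support_subset _ ((Function.support_smul_subset_left _ _).trans hs)

theorem infoMatrix_sub (f : α → ι → ℝ) {ξ η : α → ℝ} (hξ : (Function.support ξ).Finite)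
    (hη : (Function.support η).Finite) :
    infoMatrix f ξ - infoMatrix f η = infoMatrix f (ξ - η) := by
  have hs := hξ.union hη
  rw [infoMatrix_eq_sum f (s := hs.toFinset) (by simp),
    infoMatrix_eq_sum f (s := hs.toFinset) (by simp),
    infoMatrix_eq_sum f (s := hs.toFinset) (by simpa using Function.support_sub ξ η),
    ← Finset.sum_sub_distrib]
  simp only [Pi.sub_apply, sub_smul]

theorem infoMatrix_smul (f : α → ι → ℝ) (c : ℝ) (ξ : α → ℝ) :
    infoMatrix f (c • ξ) = c • infoMatrix f ξ := by
  simp only [infoMatrix, smul_finsum, Pi.smul_apply, smul_smul, smul_eq_mul]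

theorem infoMatrix_eq_mul_mul_transpose {f : α → ι → ℝ} {g : α → κ → ℝ} {C : Matrix ι κ ℝ}
    {Y : Set α} (hfg : ∀ x ∈ Y, f x = C *ᵥ g x) {ξ : α → ℝ} (hξ : (Function.support ξ).Finite)
    (hξY : Function.support ξ ⊆ Y) :
    infoMatrix f ξ = C * infoMatrix g ξ * Cᵀ := by
  rw [infoMatrix_eq_sum f (s := hξ.toFinset) (by simp),
    infoMatrix_eq_sum g (s := hξ.toFinset) (by simp), Matrix.mul_sum, Matrix.sum_mul]
  refine Finset.sum_congr rfl fun x hx => ?_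
  rw [Matrix.mul_smul, Matrix.smul_mul, mul_mul_transpose_eq_vecMulVec,
    ← hfg x (hξY (by simpa using hx))]

theorem IsDesign.mono {X Y : Set α} {ξ : α → ℝ} (hξ : IsDesign Y ξ) (hYX : Y ⊆ X) :
    IsDesign X ξ :=
  ⟨hξ.1, hξ.2.1, hξ.2.2.1.trans hYX, hξ.2.2.2⟩

theorem IsDesign.add_smul_sub {X : Set α} {ξ η ζ : α → ℝ} {c : ℝ} (hξ : IsDesign X ξ)
    (hη : IsDesign X η) (hζ : IsDesign X ζ) (hc : 0 ≤ c) (hcζ : c • ζ ≤ ξ) :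
    IsDesign X (ξ + c • (η - ζ)) := by
  obtain ⟨hξfin, -, hξX, hξ1⟩ := hξ
  obtain ⟨hηfin, hη0, hηX, hη1⟩ := hη
  obtain ⟨hζfin, -, hζX, hζ1⟩ := hζ
  have hsupp : Function.support (ξ + c • (η - ζ)) ⊆
      Function.support ξ ∪ (Function.support η ∪ Function.support ζ) :=
    (Function.support_add _ _).trans
      (Set.union_subset_union_right _ (Function.support_smul_sub_subset _ _ _))
  refine ⟨(hξfin.union (hηfin.union hζfin)).subset hsupp, fun x => ?_,
    hsupp.trans (Set.union_subset hξX (Set.union_subset hηX hζX)), ?_⟩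
  · have hle := hcζ x
    simp only [Pi.add_apply, Pi.smul_apply, Pi.sub_apply, smul_eq_mul] at hle ⊢
    nlinarith [mul_nonneg hc (hη0 x)]
  · have hsub : (Function.support (c • (η - ζ))).Finite :=
      (hηfin.union hζfin).subset (Function.support_smul_sub_subset _ _ _)
    simp only [Pi.add_apply] at hsub ⊢
    rw [finsum_add_distrib hξfin hsub]
    simp only [Pi.smul_apply, Pi.sub_apply]
    rw [← smul_finsum, finsum_sub_distrib hηfin hζfin, hξ1, hη1,
      hζ1, sub_self, smul_zero, add_zero]

theorem IsDesign.indicator_div {X Y : Set α} {ξ : α → ℝ} (hξ : IsDesign X ξ)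
    (hY : 0 < ∑ᶠ x ∈ Y, ξ x) :
    IsDesign Y (fun x => Y.indicator ξ x / ∑ᶠ x ∈ Y, ξ x) := by
  obtain ⟨hξfin, hξ0, -, -⟩ := hξ
  have hsupp : Function.support (fun x => Y.indicator ξ x / ∑ᶠ x ∈ Y, ξ x) ⊆
      Y ∩ Function.support ξ := by
    rw [Function.support_div, Set.support_indicator]
    exact Set.inter_subset_left
  refine ⟨hξfin.subset (hsupp.trans Set.inter_subset_right),
    fun x => div_nonneg (Set.indicator_nonneg (fun x _ => hξ0 x) x) hY.le,
    hsupp.trans Set.inter_subset_left, ?_⟩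
  simp_rw [div_eq_mul_inv]
  rw [← finsum_mul, ← finsum_mem_def, mul_inv_cancel₀ hY.ne']

end Designs

theorem IsAdmissible.of_smul_le {α ι κ : Type*} [Fintype ι] [Fintype κ] {X Y : Set α}
    {f : α → ι → ℝ} {g : α → κ → ℝ} {C : Matrix ι κ ℝ} {ξ ζ : α → ℝ} {c : ℝ}
    (hξ : IsAdmissible X f ξ) (hζ : IsDesign Y ζ) (hYX : Y ⊆ X)
    (hfg : ∀ x ∈ Y, f x = C *ᵥ g x) (hC : Function.Injective C.mulVec) (hc : 0 < c)
    (hcζ : c • ζ ≤ ξ) :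
    IsAdmissible Y g ζ := by
  refine ⟨hζ, ?_⟩
  rintro ⟨η, hη, hle, hne⟩
  have hlift : IsDesign X (ξ + c • (η - ζ)) :=
    hξ.1.add_smul_sub (hη.mono hYX) (hζ.mono hYX) hc.le hcζ
  have hδ : (Function.support (c • (η - ζ))).Finite :=
    (hη.1.union hζ.1).subset (Function.support_smul_sub_subset _ _ _)
  have hgain : infoMatrix f (ξ + c • (η - ζ)) - infoMatrix f ξ =
      C * (c • (infoMatrix g η - infoMatrix g ζ)) * Cᵀ := by
    rw [infoMatrix_sub f hlift.1 hξ.1.1,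
      add_sub_cancel_left, infoMatrix_eq_mul_mul_transpose hfg hδ
        ((Function.support_smul_sub_subset _ _ _).trans (Set.union_subset hη.2.2.1 hζ.2.2.1)),
      infoMatrix_smul, infoMatrix_sub g hη.1 hζ.1]
  refine hξ.2 ⟨ξ + c • (η - ζ), hlift, ?_, ?_⟩
  · rw [hgain, ← conjTranspose_eq_transpose_of_trivial]
    exact (hle.smul hc.le).mul_mul_conjTranspose_same C
  · intro heq
    rw [heq, sub_self, eq_comm] at hgain
    have := eq_zero_of_mul_mul_transpose_eq_zero hC hgain
    rw [smul_eq_zero, sub_eq_zero] at this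
    exact hne (this.resolve_left hc.ne')

theorem admissible_implies_conditional_admissible_general
    {q p m : ℕ} (X : Set (Fin q → ℝ))
    (f : (Fin q → ℝ) → Fin p → ℝ)
    (t : (Fin q → ℝ) → ℝ) (tstar : ℝ)
    (Xt : Set (Fin q → ℝ)) (hXt : Xt = {x ∈ X | t x = tstar})
    (ft : (Fin q → ℝ) → Fin m → ℝ)
    (C : Matrix (Fin p) (Fin m) ℝ) (hC : C.rank = m)
    (hCf : ∀ x ∈ Xt, f x = C *ᵥ ft x)
    (ξ : (Fin q → ℝ) → ℝ)
    (mass : ℝ) (hmass : mass = ∑ᶠ x ∈ Xt, ξ x) (hpos : 0 < mass)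
    (ξt : (Fin q → ℝ) → ℝ)
    (hξt_in : ∀ x ∈ Xt, ξt x = ξ x / mass)
    (hξt_out : ∀ x ∉ Xt, ξt x = 0)
    (hadm : IsAdmissible X f ξ) :
    IsAdmissible Xt ft ξt := by
  have hξt : ξt = fun x => Xt.indicator ξ x / mass := funext fun x => by
    by_cases hx : x ∈ Xt
    · rw [hξt_in x hx, Set.indicator_of_mem hx]
    · rw [hξt_out x hx, Set.indicator_of_notMem hx, zero_div]
  have hdom : mass • ξt ≤ ξ := fun x => by
    by_cases hx : x ∈ Xt
    · simp only [Pi.smul_apply, hξt_in x hx, smul_eq_mul, mul_div_cancel₀ _ hpos.ne', le_refl]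
    · simpa [hξt_out x hx] using hadm.1.2.1 x
  have hdesign : IsDesign Xt ξt := by
    subst hmass hξt
    exact hadm.1.indicator_div hpos
  exact hadm.of_smul_le hdesign (hXt ▸ Set.sep_subset X _) hCf
    (mulVec_injective_of_rank_eq_card (by rw [hC, Fintype.card_fin])) hpos hdom

/-- Theorem 3: admissibility of a design implies admissibility of each of its
conditional designs in the corresponding conditional model. -/
theorem admissible_implies_conditional_admissible
    {q p m : ℕ} (X : Set (Fin q → ℝ))
    (f : (Fin q → ℝ) → Fin p → ℝ)
    (t : (Fin q → ℝ) → ℝ) (tstar : ℝ) (htstar : tstar ∈ t '' X)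
    (Xt : Set (Fin q → ℝ)) (hXt : Xt = {x ∈ X | t x = tstar})
    (ft : (Fin q → ℝ) → Fin m → ℝ)
    (hli : LinearIndependent ℝ (fun j : Fin m => fun x : Xt => ft (x : Fin q → ℝ) j))
    (C : Matrix (Fin p) (Fin m) ℝ) (hC : C.rank = m)
    (hCf : ∀ x ∈ Xt, f x = C *ᵥ ft x)
    (ξ : (Fin q → ℝ) → ℝ)
    (mass : ℝ) (hmass : mass = ∑ᶠ x ∈ Xt, ξ x) (hpos : 0 < mass)
    (ξt : (Fin q → ℝ) → ℝ)
    (hξt_in : ∀ x ∈ Xt, ξt x = ξ x / mass)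
    (hξt_out : ∀ x ∉ Xt, ξt x = 0)
    (hadm : IsAdmissible X f ξ) :
    IsAdmissible Xt ft ξt :=
  admissible_implies_conditional_admissible_general X f t tstar Xt hXt ft C hC hCf ξ mass hmass hpos
    ξt hξt_in hξt_out hadm
end
end

section
/- Let L ≥ 1, and for l = 1, …, L let a_l ≠ 0 and λ_l > 0 with λ_l ≥ |a_l|/2. Then the function g(x) = Σ_{l=1}^{L} e^{−2λ_l x}·(1 + a_l²x²) is strictly decreasing on the interval [0, ∞). -/
open Set

/-!
Each summand `e^{-2λx}(1 + a²x²)` has derivative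
`-e^{-2λx} (|a|(1 - |a|x)² + (2λ - |a|)(1 + a²x²))`, which under `|a| ≤ 2λ`, `λ > 0` is
negative except possibly at the single point `x = 1/|a|`. A differentiable function whose
derivative is negative off one point is strictly antitone on either side of it, hence everywhere;
and a nonempty sum of strictly antitone functions is strictly antitone.
-/

theorem Finset.strictAntiOn_sum {ι α β : Type*} [Preorder α] [AddCommMonoid β] [PartialOrder β]
    [IsOrderedCancelAddMonoid β] {s : Finset ι} {f : ι → α → β} {D : Set α}
    (hs : s.Nonempty) (hf : ∀ i ∈ s, StrictAntiOn (f i) D) :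
    StrictAntiOn (fun x => ∑ i ∈ s, f i x) D :=
  fun _ hx _ hy hxy => Finset.sum_lt_sum_of_nonempty hs fun i hi => hf i hi hx hy hxy

theorem strictAntiOn_Ici_of_hasDerivAt_neg_of_ne {f f' : ℝ → ℝ} {a c : ℝ} (hac : a ≤ c)
    (hf : ∀ x, HasDerivAt f (f' x) x) (hf' : ∀ x, a < x → x ≠ c → f' x < 0) :
    StrictAntiOn f (Ici a) := by
  have hcont : Continuous f := continuous_iff_continuousAt.2 fun x => (hf x).continuousAt
  have hleft : StrictAntiOn f (Icc a c) :=
    strictAntiOn_of_hasDerivWithinAt_neg (convex_Icc a c) hcont.continuousOn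
      (fun x _ => (hf x).hasDerivWithinAt) fun x hx => by
        rw [interior_Icc] at hx
        exact hf' x hx.1 hx.2.ne
  have hright : StrictAntiOn f (Ici c) :=
    strictAntiOn_of_hasDerivWithinAt_neg (convex_Ici c) hcont.continuousOn
      (fun x _ => (hf x).hasDerivWithinAt) fun x hx => by
        rw [interior_Ici] at hx
        exact hf' x (hac.trans_lt hx) hx.ne'
  rw [← Icc_union_Ici_eq_Ici hac]
  exact hleft.union hright (isGreatest_Icc hac) isLeast_Ici

theorem hasDerivAt_exp_mul_one_add_sq (lam a x : ℝ) :
    HasDerivAt (fun x => Real.exp (-2 * lam * x) * (1 + a ^ 2 * x ^ 2))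
      (-Real.exp (-2 * lam * x) *
        (|a| * (1 - |a| * x) ^ 2 + (2 * lam - |a|) * (1 + a ^ 2 * x ^ 2))) x := by
  have hexp :
      HasDerivAt (fun x => Real.exp (-2 * lam * x)) (Real.exp (-2 * lam * x) * (-2 * lam)) x :=
    ((hasDerivAt_id' x).const_mul (-2 * lam)).exp.congr_deriv (by ring)
  have hpoly : HasDerivAt (fun x => 1 + a ^ 2 * x ^ 2) (a ^ 2 * (2 * x)) x :=
    ((hasDerivAt_pow 2 x).const_mul (a ^ 2)).const_add 1 |>.congr_deriv (by ring)
  refine (hexp.mul hpoly).congr_deriv ?_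
  rw [← sq_abs a]
  ring

theorem strictAntiOn_exp_mul_one_add_sq {lam a : ℝ} (hlam : 0 < lam) (ha : |a| / 2 ≤ lam) :
    StrictAntiOn (fun x => Real.exp (-2 * lam * x) * (1 + a ^ 2 * x ^ 2)) (Ici 0) := by
  refine strictAntiOn_Ici_of_hasDerivAt_neg_of_ne (inv_nonneg.2 (abs_nonneg a))
    (hasDerivAt_exp_mul_one_add_sq lam a) fun x _ hx => ?_
  rw [neg_mul]
  refine neg_neg_of_pos (mul_pos (Real.exp_pos _) ?_)
  rcases eq_or_ne a 0 with rfl | ha0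
  · norm_num [hlam]
  · have habs : 0 < |a| := abs_pos.2 ha0
    have hx' : 1 - |a| * x ≠ 0 := by
      rw [sub_ne_zero, ne_comm, Ne, mul_eq_one_iff_inv_eq₀ habs.ne']
      exact hx.symm
    have hgap : 0 ≤ 2 * lam - |a| := by linarith
    positivity

theorem sum_exp_poly_strictAntiOn_general
    (L : ℕ) (hL : 1 ≤ L) (a lam : Fin L → ℝ)
    (hpos : ∀ l, 0 < lam l) (hcond : ∀ l, |a l| / 2 ≤ lam l) :
    StrictAntiOn
      (fun x : ℝ => ∑ l, Real.exp (-2 * lam l * x) * (1 + (a l) ^ 2 * x ^ 2))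
      (Set.Ici 0) :=
  have : Nonempty (Fin L) := ⟨⟨0, hL⟩⟩
  Finset.strictAntiOn_sum Finset.univ_nonempty fun l _ =>
    strictAntiOn_exp_mul_one_add_sq (hpos l) (hcond l)

/-- the function `g(x) = Σₗ e^{−2λₗx}(1 + aₗ²x²)` is strictly decreasing on
`[0, ∞)` provided `aₗ ≠ 0`, `λₗ > 0` and `λₗ ≥ |aₗ|/2` for all `l`. -/
theorem sum_exp_poly_strictAntiOn
    (L : ℕ) (hL : 1 ≤ L) (a lam : Fin L → ℝ)
    (ha : ∀ l, a l ≠ 0) (hpos : ∀ l, 0 < lam l) (hcond : ∀ l, |a l| / 2 ≤ lam l) :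
    StrictAntiOn
      (fun x : ℝ => ∑ l, Real.exp (-2 * lam l * x) * (1 + (a l) ^ 2 * x ^ 2))
      (Set.Ici 0) :=
  sum_exp_poly_strictAntiOn_general L hL a lam hpos hcond
end

section
/- Consider the two-factor linear regression model without intercept on X = [0, 1]² with regression functions f(x₁, x₂) = (x₁, x₂)ᵀ ∈ ℝ². The design ξ*_D assigning mass 1/3 to each of the points (1, 1), (1, 0) and (0, 1) is D-optimal: its information matrix is M(ξ*_D) = [[2/3, 1/3], [1/3, 2/3]] and det M(ξ) ≤ det M(ξ*_D) = 1/3 for every design ξ on X. -/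
open Matrix Set

noncomputable section

lemma infoMatrix_apply' {α : Type*} (f : α → Fin 2 → ℝ) (ξ : α → ℝ)
    (s : Finset α) (hs : Function.support ξ ⊆ ↑s) (i j : Fin 2) :
    infoMatrix f ξ i j = ∑ x ∈ s, ξ x * (f x i * f x j) := by
  have h : infoMatrix f ξ = ∑ x ∈ s, ξ x • Matrix.vecMulVec (f x) (f x) := by
    apply finsum_eq_finset_sum_of_support_subset
    intro x hx
    apply hs
    intro hx0
    apply hx
    simp [hx0]
  rw [h]
  simp [Matrix.sum_apply, Matrix.vecMulVec_apply, mul_assoc]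

/-- Example 1, D-optimality: the design with equal masses `1/3` at
`(1,1)`, `(1,0)` and `(0,1)` is `D`-optimal for the two-factor linear model without
intercept on `[0,1]²`. -/
theorem two_factor_no_intercept_D_optimal
    (f : ℝ × ℝ → Fin 2 → ℝ) (hf : ∀ x : ℝ × ℝ, f x = ![x.1, x.2])
    (ξD : ℝ × ℝ → ℝ)
    (hξD : ∀ p : ℝ × ℝ,
      ξD p = if p = ((1 : ℝ), (1 : ℝ)) ∨ p = ((1 : ℝ), (0 : ℝ)) ∨ p = ((0 : ℝ), (1 : ℝ))
        then 1 / 3 else 0) :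
    infoMatrix f ξD = !![2 / 3, 1 / 3; 1 / 3, 2 / 3] ∧
    (infoMatrix f ξD).det = 1 / 3 ∧
    ∀ ξ, IsDesign (Set.Icc (0 : ℝ) 1 ×ˢ Set.Icc (0 : ℝ) 1) ξ →
      (infoMatrix f ξ).det ≤ (infoMatrix f ξD).det := by
  classical
  have hMD : infoMatrix f ξD = !![2 / 3, 1 / 3; 1 / 3, 2 / 3] := by
    set S : Finset (ℝ × ℝ) := {((1:ℝ),(1:ℝ)), ((1:ℝ),(0:ℝ)), ((0:ℝ),(1:ℝ))} with hS
    have hsupp : Function.support ξD ⊆ ↑S := by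
      intro p hp
      rw [Function.mem_support, hξD] at hp
      by_cases h : p = ((1 : ℝ), (1 : ℝ)) ∨ p = ((1 : ℝ), (0 : ℝ)) ∨ p = ((0 : ℝ), (1 : ℝ))
      · simpa [hS] using h
      · rw [if_neg h] at hp; exact absurd rfl hp
    ext i j
    rw [infoMatrix_apply' f ξD S hsupp i j]
    have h1 : ((1:ℝ),(1:ℝ)) ∉ ({((1:ℝ),(0:ℝ)), ((0:ℝ),(1:ℝ))} : Finset (ℝ × ℝ)) := by
      simp [Prod.ext_iff]
    have h2 : ((1:ℝ),(0:ℝ)) ∉ ({((0:ℝ),(1:ℝ))} : Finset (ℝ × ℝ)) := by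
      simp [Prod.ext_iff]
    rw [hS, Finset.sum_insert h1, Finset.sum_insert h2, Finset.sum_singleton]
    fin_cases i <;> fin_cases j <;>
      simp [hξD, hf] <;> norm_num [Prod.ext_iff]
  have hdetD : (infoMatrix f ξD).det = 1 / 3 := by
    rw [hMD, Matrix.det_fin_two_of]; norm_num
  refine ⟨hMD, hdetD, ?_⟩
  intro ξ hdes
  rw [hdetD]
  obtain ⟨hfin, hnn, hsub, hsum⟩ := hdes
  set s := hfin.toFinset with hs
  have hscoe : Function.support ξ ⊆ ↑s := by simp [hs]
  have hmem : ∀ x ∈ s, x.1 ∈ Set.Icc (0:ℝ) 1 ∧ x.2 ∈ Set.Icc (0:ℝ) 1 := by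
    intro x hx
    have := hsub (hfin.mem_toFinset.mp hx)
    exact Set.mem_prod.mp this
  have hsum1 : ∑ x ∈ s, ξ x = 1 := by rw [← finsum_eq_sum ξ hfin]; exact hsum
  set a := ∑ x ∈ s, ξ x * (x.1 * x.1) with ha
  set b := ∑ x ∈ s, ξ x * (x.1 * x.2) with hb
  set c := ∑ x ∈ s, ξ x * (x.2 * x.2) with hc
  have e00 : infoMatrix f ξ 0 0 = a := by
    rw [infoMatrix_apply' f ξ s hscoe]
    exact Finset.sum_congr rfl fun x _ => by simp [hf]
  have e01 : infoMatrix f ξ 0 1 = b := by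
    rw [infoMatrix_apply' f ξ s hscoe]
    exact Finset.sum_congr rfl fun x _ => by simp [hf]
  have e10 : infoMatrix f ξ 1 0 = b := by
    rw [infoMatrix_apply' f ξ s hscoe]
    exact Finset.sum_congr rfl fun x _ => by simp [hf, mul_comm]
  have e11 : infoMatrix f ξ 1 1 = c := by
    rw [infoMatrix_apply' f ξ s hscoe]
    exact Finset.sum_congr rfl fun x _ => by simp [hf]
  have hdet : (infoMatrix f ξ).det = a * c - b * b := by
    rw [Matrix.det_fin_two, e00, e01, e10, e11]
  have ha0 : 0 ≤ a := Finset.sum_nonneg fun x hx => by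
    obtain ⟨⟨h1, _⟩, ⟨h3, _⟩⟩ := hmem x hx
    have := hnn x; positivity
  have hb0 : 0 ≤ b := Finset.sum_nonneg fun x hx => by
    obtain ⟨⟨h1, _⟩, ⟨h3, _⟩⟩ := hmem x hx
    have := hnn x; positivity
  have hc0 : 0 ≤ c := Finset.sum_nonneg fun x hx => by
    obtain ⟨⟨h1, _⟩, ⟨h3, _⟩⟩ := hmem x hx
    have := hnn x; positivity
  have ha1 : a ≤ 1 := by
    rw [← hsum1]
    apply Finset.sum_le_sum
    intro x hx
    obtain ⟨⟨h1, h2⟩, _⟩ := hmem x hx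
    have h5 : x.1 * x.1 ≤ 1 := by nlinarith
    calc ξ x * (x.1 * x.1) ≤ ξ x * 1 := mul_le_mul_of_nonneg_left h5 (hnn x)
    _ = ξ x := mul_one _
  have hc1 : c ≤ 1 := by
    rw [← hsum1]
    apply Finset.sum_le_sum
    intro x hx
    obtain ⟨_, ⟨h3, h4⟩⟩ := hmem x hx
    have h5 : x.2 * x.2 ≤ 1 := by nlinarith
    calc ξ x * (x.2 * x.2) ≤ ξ x * 1 := mul_le_mul_of_nonneg_left h5 (hnn x)
    _ = ξ x := mul_one _
  have hkey : a + c - b ≤ 1 := by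
    have heq : a + c - b = ∑ x ∈ s, (ξ x * (x.1 * x.1) + ξ x * (x.2 * x.2)
        - ξ x * (x.1 * x.2)) := by
      rw [ha, hb, hc, ← Finset.sum_add_distrib, ← Finset.sum_sub_distrib]
    rw [heq, ← hsum1]
    apply Finset.sum_le_sum
    intro x hx
    obtain ⟨⟨h1, h2⟩, ⟨h3, h4⟩⟩ := hmem x hx
    nlinarith [hnn x, mul_nonneg h1 h3,
      mul_nonneg (sub_nonneg.2 h2) (sub_nonneg.2 h4),
      mul_nonneg (hnn x) (mul_nonneg h1 h3),
      mul_nonneg (hnn x) (mul_nonneg (sub_nonneg.2 h2) (sub_nonneg.2 h4))]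
  rw [hdet]
  rcases le_or_gt (a + c) 1 with h | h
  · nlinarith [sq_nonneg (a - c), sq_nonneg b]
  · nlinarith [sq_nonneg (a + c/2 - 1), sq_nonneg (c - 2/3),
      mul_nonneg hb0 (by linarith : (0:ℝ) ≤ b - (a + c - 1)),
      mul_nonneg (by linarith : (0:ℝ) ≤ a + c - 1) (by linarith : (0:ℝ) ≤ b - (a + c - 1))]
end
end

section
/- Consider the two-factor exponential growth model on X = [0, 1]² with gradient regression functions f(x₁, x₂) = (1, −x₁e^{−θ₁x₁}, −x₂e^{−θ₂x₂})ᵀ ∈ ℝ³, where θ₁ ≥ 1 and θ₂ ≥ 1. The design assigning mass 1/4 to each of the four points (0, 0), (0, 1/θ₂), (1/θ₁, 0) and (1/θ₁, 1/θ₂) is locally D-optimal, i.e., it maximizes det M(ξ) over all designs ξ on X. -/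
open Matrix Set

noncomputable section

private lemma texp_le {θ t : ℝ} (hθ : 0 < θ) (ht : 0 ≤ t) :
    t * Real.exp (-θ * t) ≤ (1 / θ) * Real.exp (-1) := by
  have h := Real.add_one_le_exp (θ * t - 1)
  have hpos : (0:ℝ) < Real.exp (-(θ * t)) := Real.exp_pos _
  have he : Real.exp (θ * t - 1) * Real.exp (-(θ * t)) = Real.exp (-1) := by
    rw [← Real.exp_add]; ring_nf
  have key : θ * t * Real.exp (-(θ * t)) ≤ Real.exp (-1) := by
    calc θ * t * Real.exp (-(θ * t)) ≤ Real.exp (θ * t - 1) * Real.exp (-(θ * t)) := by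
          nlinarith
      _ = Real.exp (-1) := he
  have : -θ * t = -(θ * t) := by ring
  rw [this]
  rw [div_mul_eq_mul_div, le_div_iff₀ hθ] at *
  nlinarith

private lemma infoMatrix_entry (f : ℝ × ℝ → Fin 3 → ℝ) (η : ℝ × ℝ → ℝ) (s : Finset (ℝ × ℝ))
    (hs : Function.support η ⊆ ↑s) (i j : Fin 3) :
    infoMatrix f η i j = ∑ x ∈ s, η x * (f x i * f x j) := by
  have h1 : infoMatrix f η = ∑ x ∈ s, η x • Matrix.vecMulVec (f x) (f x) := by
    apply finsum_eq_finset_sum_of_support_subset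
    intro x hx
    refine hs ?_
    intro h0
    apply hx
    simp only [Set.mem_setOf_eq, h0, zero_smul]
  rw [h1, Matrix.sum_apply]
  refine Finset.sum_congr rfl fun x _ => ?_
  simp [Matrix.vecMulVec_apply, mul_assoc]

private lemma det_infoMatrix (f : ℝ × ℝ → Fin 3 → ℝ) (η : ℝ × ℝ → ℝ) (s : Finset (ℝ × ℝ))
    (hs : Function.support η ⊆ ↑s) (h0 : ∀ x, f x 0 = 1)
    (hsum : ∑ x ∈ s, η x = 1) :
    (infoMatrix f η).det =
      ((∑ x ∈ s, η x * (f x 1 * f x 1)) - (∑ x ∈ s, η x * f x 1) ^ 2) *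
        ((∑ x ∈ s, η x * (f x 2 * f x 2)) - (∑ x ∈ s, η x * f x 2) ^ 2) -
      ((∑ x ∈ s, η x * (f x 1 * f x 2)) -
          (∑ x ∈ s, η x * f x 1) * (∑ x ∈ s, η x * f x 2)) ^ 2 := by
  have e := infoMatrix_entry f η s hs
  have e00 : ∑ x ∈ s, η x * (f x 0 * f x 0) = 1 := by
    rw [← hsum]; exact Finset.sum_congr rfl fun x _ => by rw [h0, one_mul, mul_one]
  have e01 : ∑ x ∈ s, η x * (f x 0 * f x 1) = ∑ x ∈ s, η x * f x 1 :=
    Finset.sum_congr rfl fun x _ => by rw [h0, one_mul]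
  have e10 : ∑ x ∈ s, η x * (f x 1 * f x 0) = ∑ x ∈ s, η x * f x 1 :=
    Finset.sum_congr rfl fun x _ => by rw [h0, mul_one]
  have e02 : ∑ x ∈ s, η x * (f x 0 * f x 2) = ∑ x ∈ s, η x * f x 2 :=
    Finset.sum_congr rfl fun x _ => by rw [h0, one_mul]
  have e20 : ∑ x ∈ s, η x * (f x 2 * f x 0) = ∑ x ∈ s, η x * f x 2 :=
    Finset.sum_congr rfl fun x _ => by rw [h0, mul_one]
  have e21 : ∑ x ∈ s, η x * (f x 2 * f x 1) = ∑ x ∈ s, η x * (f x 1 * f x 2) :=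
    Finset.sum_congr rfl fun x _ => by rw [mul_comm (f x 2)]
  rw [Matrix.det_fin_three, e 0 0, e 0 1, e 0 2, e 1 0, e 1 1, e 1 2, e 2 0, e 2 1, e 2 2,
    e00, e01, e10, e02, e20, e21]
  ring

private lemma sum_centered (s : Finset (ℝ × ℝ)) (w g : ℝ × ℝ → ℝ)
    (hsum : ∑ x ∈ s, w x = 1) (c : ℝ) :
    ∑ x ∈ s, w x * (g x - c) ^ 2 =
      (∑ x ∈ s, w x * (g x * g x)) - 2 * c * (∑ x ∈ s, w x * g x) + c ^ 2 := by
  have : ∀ x ∈ s, w x * (g x - c) ^ 2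
      = w x * (g x * g x) - 2 * c * (w x * g x) + c ^ 2 * w x := fun x _ => by ring
  rw [Finset.sum_congr rfl this, Finset.sum_add_distrib, Finset.sum_sub_distrib,
    ← Finset.mul_sum, ← Finset.mul_sum, hsum, mul_one]

private lemma var_nonneg (s : Finset (ℝ × ℝ)) (w g : ℝ × ℝ → ℝ)
    (hw : ∀ x ∈ s, 0 ≤ w x) (hsum : ∑ x ∈ s, w x = 1) :
    0 ≤ (∑ x ∈ s, w x * (g x * g x)) - (∑ x ∈ s, w x * g x) ^ 2 := by
  have h := sum_centered s w g hsum (∑ x ∈ s, w x * g x)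
  have hp : 0 ≤ ∑ x ∈ s, w x * (g x - ∑ x ∈ s, w x * g x) ^ 2 :=
    Finset.sum_nonneg fun x hx => mul_nonneg (hw x hx) (sq_nonneg _)
  nlinarith [sq_nonneg (∑ x ∈ s, w x * g x)]

private lemma var_le (s : Finset (ℝ × ℝ)) (w g : ℝ × ℝ → ℝ)
    (hw : ∀ x ∈ s, 0 ≤ w x) (hsum : ∑ x ∈ s, w x = 1) (c r : ℝ) (hr : 0 ≤ r)
    (hg : ∀ x ∈ s, w x ≠ 0 → (g x - c) ^ 2 ≤ r) :
    (∑ x ∈ s, w x * (g x * g x)) - (∑ x ∈ s, w x * g x) ^ 2 ≤ r := by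
  have h1 : ∑ x ∈ s, w x * (g x - c) ^ 2 ≤ r := by
    calc ∑ x ∈ s, w x * (g x - c) ^ 2 ≤ ∑ x ∈ s, w x * r := by
          refine Finset.sum_le_sum fun x hx => ?_
          rcases eq_or_ne (w x) 0 with h | h
          · simp [h]
          · exact mul_le_mul_of_nonneg_left (hg x hx h) (hw x hx)
      _ = r := by rw [← Finset.sum_mul, hsum, one_mul]
  have h2 := sum_centered s w g hsum c
  nlinarith [sq_nonneg ((∑ x ∈ s, w x * g x) - c)]

set_option maxHeartbeats 1000000 in
/-- for the two-factor exponential growth model on `[0,1]²`, the design with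
equal masses `1/4` at `(0,0)`, `(0,1/θ₂)`, `(1/θ₁,0)` and `(1/θ₁,1/θ₂)` is locally
`D`-optimal. -/
theorem two_factor_exponential_growth_D_optimal
    (θ₁ θ₂ : ℝ) (hθ₁ : 1 ≤ θ₁) (hθ₂ : 1 ≤ θ₂)
    (f : ℝ × ℝ → Fin 3 → ℝ)
    (hf : ∀ x : ℝ × ℝ,
      f x = ![1, -x.1 * Real.exp (-θ₁ * x.1), -x.2 * Real.exp (-θ₂ * x.2)])
    (ξ : ℝ × ℝ → ℝ)
    (hξ : ∀ p : ℝ × ℝ,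
      ξ p = if p = ((0 : ℝ), (0 : ℝ)) ∨ p = ((0 : ℝ), 1 / θ₂) ∨
              p = (1 / θ₁, (0 : ℝ)) ∨ p = (1 / θ₁, 1 / θ₂)
            then 1 / 4 else 0) :
    IsDesign (Set.Icc (0 : ℝ) 1 ×ˢ Set.Icc (0 : ℝ) 1) ξ ∧
    ∀ η, IsDesign (Set.Icc (0 : ℝ) 1 ×ˢ Set.Icc (0 : ℝ) 1) η →
      (infoMatrix f η).det ≤ (infoMatrix f ξ).det := by
  classical
  have hθ₁0 : (0 : ℝ) < θ₁ := lt_of_lt_of_le one_pos hθ₁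
  have hθ₂0 : (0 : ℝ) < θ₂ := lt_of_lt_of_le one_pos hθ₂
  have h1θ₁ : (0 : ℝ) < 1 / θ₁ := by positivity
  have h1θ₂ : (0 : ℝ) < 1 / θ₂ := by positivity
  set b₁ : ℝ := (1 / θ₁) * Real.exp (-1) with hb₁
  set b₂ : ℝ := (1 / θ₂) * Real.exp (-1) with hb₂
  set P1 : ℝ × ℝ := ((0 : ℝ), (0 : ℝ)) with hP1
  set P2 : ℝ × ℝ := ((0 : ℝ), 1 / θ₂) with hP2
  set P3 : ℝ × ℝ := (1 / θ₁, (0 : ℝ)) with hP3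
  set P4 : ℝ × ℝ := (1 / θ₁, 1 / θ₂) with hP4
  have d12 : P1 ≠ P2 := fun h => h1θ₂.ne (congrArg Prod.snd h)
  have d13 : P1 ≠ P3 := fun h => h1θ₁.ne (congrArg Prod.fst h)
  have d14 : P1 ≠ P4 := fun h => h1θ₁.ne (congrArg Prod.fst h)
  have d23 : P2 ≠ P3 := fun h => h1θ₂.ne.symm (congrArg Prod.snd h)
  have d24 : P2 ≠ P4 := fun h => h1θ₁.ne (congrArg Prod.fst h)
  have d34 : P3 ≠ P4 := fun h => h1θ₂.ne (congrArg Prod.snd h)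
  set s₀ : Finset (ℝ × ℝ) := insert P1 (insert P2 (insert P3 {P4})) with hs₀
  have hmem : ∀ p : ℝ × ℝ, p ∈ s₀ ↔ (p = P1 ∨ p = P2 ∨ p = P3 ∨ p = P4) := by
    intro p; simp [hs₀]
  have hsupp : Function.support ξ ⊆ ↑s₀ := by
    intro p hp
    rw [Function.mem_support, hξ p] at hp
    by_cases h : p = P1 ∨ p = P2 ∨ p = P3 ∨ p = P4
    · exact (hmem p).2 h
    · exact absurd (if_neg h) hp
  have hξ1 : ξ P1 = 1 / 4 := by rw [hξ]; exact if_pos (Or.inl rfl)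
  have hξ2 : ξ P2 = 1 / 4 := by rw [hξ]; exact if_pos (Or.inr (Or.inl rfl))
  have hξ3 : ξ P3 = 1 / 4 := by rw [hξ]; exact if_pos (Or.inr (Or.inr (Or.inl rfl)))
  have hξ4 : ξ P4 = 1 / 4 := by rw [hξ]; exact if_pos (Or.inr (Or.inr (Or.inr rfl)))
  have n1 : P1 ∉ insert P2 (insert P3 ({P4} : Finset (ℝ × ℝ))) := by
    simp only [Finset.mem_insert, Finset.mem_singleton]; push_neg
    exact ⟨d12, d13, d14⟩
  have n2 : P2 ∉ insert P3 ({P4} : Finset (ℝ × ℝ)) := by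
    simp only [Finset.mem_insert, Finset.mem_singleton]; push_neg
    exact ⟨d23, d24⟩
  have n3 : P3 ∉ ({P4} : Finset (ℝ × ℝ)) := by
    simp only [Finset.mem_singleton]; exact d34
  have hsum4 : ∀ F : ℝ × ℝ → ℝ, ∑ x ∈ s₀, F x = F P1 + F P2 + F P3 + F P4 := by
    intro F
    rw [hs₀, Finset.sum_insert n1, Finset.sum_insert n2, Finset.sum_insert n3,
      Finset.sum_singleton]
    ring
  have hf0 : ∀ x : ℝ × ℝ, f x 0 = 1 := fun x => by rw [hf]; rfl
  have hf1 : ∀ x : ℝ × ℝ, f x 1 = -(x.1 * Real.exp (-θ₁ * x.1)) := fun x => by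
    rw [hf]; simp [neg_mul]
  have hf2 : ∀ x : ℝ × ℝ, f x 2 = -(x.2 * Real.exp (-θ₂ * x.2)) := fun x => by
    rw [hf]; simp [neg_mul]
  have hexp1 : -θ₁ * (1 / θ₁) = -1 := by field_simp
  have hexp2 : -θ₂ * (1 / θ₂) = -1 := by field_simp
  have u1 : f P1 1 = 0 := by rw [hf1]; simp [hP1]
  have u2 : f P2 1 = 0 := by rw [hf1]; simp [hP2]
  have u3 : f P3 1 = -b₁ := by rw [hf1, hb₁]; simp only [hP3]; rw [hexp1]
  have u4 : f P4 1 = -b₁ := by rw [hf1, hb₁]; simp only [hP4]; rw [hexp1]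
  have v1 : f P1 2 = 0 := by rw [hf2]; simp [hP1]
  have v3 : f P3 2 = 0 := by rw [hf2]; simp [hP3]
  have v2 : f P2 2 = -b₂ := by rw [hf2, hb₂]; simp only [hP2]; rw [hexp2]
  have v4 : f P4 2 = -b₂ := by rw [hf2, hb₂]; simp only [hP4]; rw [hexp2]
  have hsumξ : ∑ x ∈ s₀, ξ x = 1 := by
    rw [hsum4, hξ1, hξ2, hξ3, hξ4]; norm_num
  have hθ₁le : 1 / θ₁ ≤ 1 := by rw [div_le_one hθ₁0]; exact hθ₁
  have hθ₂le : 1 / θ₂ ≤ 1 := by rw [div_le_one hθ₂0]; exact hθ₂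
  have hdesign : IsDesign (Set.Icc (0 : ℝ) 1 ×ˢ Set.Icc (0 : ℝ) 1) ξ := by
    refine ⟨s₀.finite_toSet.subset hsupp, ?_, ?_, ?_⟩
    · intro p; rw [hξ p]; split_ifs <;> norm_num
    · intro p hp
      have := (hmem p).1 (hsupp hp)
      have h01 : (0 : ℝ) ∈ Set.Icc (0 : ℝ) 1 := by constructor <;> norm_num
      have hq1 : (1 / θ₁ : ℝ) ∈ Set.Icc (0 : ℝ) 1 := ⟨h1θ₁.le, hθ₁le⟩
      have hq2 : (1 / θ₂ : ℝ) ∈ Set.Icc (0 : ℝ) 1 := ⟨h1θ₂.le, hθ₂le⟩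
      rcases this with h | h | h | h <;> subst h <;>
        exact Set.mk_mem_prod (by assumption) (by assumption)
    · rw [finsum_eq_finset_sum_of_support_subset ξ hsupp, hsumξ]
  refine ⟨hdesign, ?_⟩
  -- determinant of the candidate design
  have aξ : ∑ x ∈ s₀, ξ x * f x 1 = -(b₁ / 2) := by
    rw [hsum4, hξ1, hξ2, hξ3, hξ4, u1, u2, u3, u4]; ring
  have Aξ : ∑ x ∈ s₀, ξ x * (f x 1 * f x 1) = b₁ ^ 2 / 2 := by
    rw [hsum4, hξ1, hξ2, hξ3, hξ4, u1, u2, u3, u4]; ring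
  have bξ : ∑ x ∈ s₀, ξ x * f x 2 = -(b₂ / 2) := by
    rw [hsum4, hξ1, hξ2, hξ3, hξ4, v1, v2, v3, v4]; ring
  have Cξ : ∑ x ∈ s₀, ξ x * (f x 2 * f x 2) = b₂ ^ 2 / 2 := by
    rw [hsum4, hξ1, hξ2, hξ3, hξ4, v1, v2, v3, v4]; ring
  have Bξ : ∑ x ∈ s₀, ξ x * (f x 1 * f x 2) = b₁ * b₂ / 4 := by
    rw [hsum4, hξ1, hξ2, hξ3, hξ4, u1, u2, u3, u4, v1, v2, v3, v4]; ring
  have hdetξ : (infoMatrix f ξ).det = b₁ ^ 2 / 4 * (b₂ ^ 2 / 4) := by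
    rw [det_infoMatrix f ξ s₀ hsupp hf0 hsumξ, aξ, Aξ, bξ, Cξ, Bξ]; ring
  intro η hη
  obtain ⟨hfin, hw, hsX, hs1⟩ := hη
  set s : Finset (ℝ × ℝ) := hfin.toFinset with hsdef
  have hsub : Function.support η ⊆ ↑s := by rw [hsdef, hfin.coe_toFinset]
  have hsumη : ∑ x ∈ s, η x = 1 := by rw [← finsum_eq_sum η hfin]; exact hs1
  have hwx : ∀ x ∈ s, 0 ≤ η x := fun x _ => hw x
  have hX : ∀ x ∈ s, η x ≠ 0 → x ∈ Set.Icc (0 : ℝ) 1 ×ˢ Set.Icc (0 : ℝ) 1 :=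
    fun x _ hx => hsX hx
  have hU : ∀ x ∈ s, η x ≠ 0 → (f x 1 - -(b₁ / 2)) ^ 2 ≤ b₁ ^ 2 / 4 := by
    intro x hx hx0
    obtain ⟨⟨h0, _⟩, _⟩ := hX x hx hx0
    have hle : x.1 * Real.exp (-θ₁ * x.1) ≤ b₁ := texp_le hθ₁0 h0
    have hge : 0 ≤ x.1 * Real.exp (-θ₁ * x.1) :=
      mul_nonneg h0 (Real.exp_pos _).le
    rw [hf1]
    nlinarith [mul_nonneg hge (sub_nonneg.mpr hle)]
  have hV : ∀ x ∈ s, η x ≠ 0 → (f x 2 - -(b₂ / 2)) ^ 2 ≤ b₂ ^ 2 / 4 := by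
    intro x hx hx0
    obtain ⟨_, ⟨h0, _⟩⟩ := hX x hx hx0
    have hle : x.2 * Real.exp (-θ₂ * x.2) ≤ b₂ := texp_le hθ₂0 h0
    have hge : 0 ≤ x.2 * Real.exp (-θ₂ * x.2) :=
      mul_nonneg h0 (Real.exp_pos _).le
    rw [hf2]
    nlinarith [mul_nonneg hge (sub_nonneg.mpr hle)]
  have hVU_le := var_le s η (fun x => f x 1) hwx hsumη (-(b₁ / 2)) (b₁ ^ 2 / 4)
    (by positivity) hU
  have hVV_le := var_le s η (fun x => f x 2) hwx hsumη (-(b₂ / 2)) (b₂ ^ 2 / 4)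
    (by positivity) hV
  have hVU_nn := var_nonneg s η (fun x => f x 1) hwx hsumη
  have hVV_nn := var_nonneg s η (fun x => f x 2) hwx hsumη
  rw [hdetξ, det_infoMatrix f η s hsub hf0 hsumη]
  have hmul : ((∑ x ∈ s, η x * (f x 1 * f x 1)) - (∑ x ∈ s, η x * f x 1) ^ 2) *
      ((∑ x ∈ s, η x * (f x 2 * f x 2)) - (∑ x ∈ s, η x * f x 2) ^ 2) ≤
      b₁ ^ 2 / 4 * (b₂ ^ 2 / 4) :=
    mul_le_mul hVU_le hVV_le hVV_nn (by positivity)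
  have hsq := sq_nonneg ((∑ x ∈ s, η x * (f x 1 * f x 2)) -
    (∑ x ∈ s, η x * f x 1) * (∑ x ∈ s, η x * f x 2))
  linarith
end
end

section
/- Let θ ≥ 1 and consider the one-factor model on X = [0, 1] with regression functions f(x) = (1, −x·e^{−θx})ᵀ ∈ ℝ². Every admissible design on [0, 1] for this model is supported on the two-point set {0, 1/θ}. -/
open Matrix Set

noncomputable section

lemma aux_support_ite {M : Type*} [AddCommGroup M] [Module ℝ M]
    (a : ℝ) (x₀ : ℝ) (F : ℝ → M) :
    Function.support (fun x => (if x = x₀ then a else 0) • F x) ⊆ {x₀} := by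
  intro x hx
  by_contra h
  simp only [Set.mem_singleton_iff] at h
  simp [Function.mem_support, h] at hx

lemma aux_finsum_ite_smul {M : Type*} [AddCommGroup M] [Module ℝ M]
    (a : ℝ) (x₀ : ℝ) (F : ℝ → M) :
    ∑ᶠ x, (if x = x₀ then a else 0) • F x = a • F x₀ := by
  rw [finsum_eq_single _ x₀]
  · simp
  · intro x hx; simp [hx]

lemma aux_info {M : Type*} [AddCommGroup M] [Module ℝ M] (F : ℝ → M) (ξ : ℝ → ℝ)
    (hfin : (Function.support ξ).Finite) (a b cc p q s : ℝ) :
    ∑ᶠ y, (ξ y + ((if y = p then a else 0) + (if y = q then b else 0)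
        - (if y = s then cc else 0))) • F y
      = (∑ᶠ y, ξ y • F y) + (a • F p + b • F q - cc • F s) := by
  have h1 : (Function.support fun y => ξ y • F y).Finite := by
    refine hfin.subset ?_
    intro y hy
    by_contra h
    simp only [Function.mem_support, not_not] at h
    simp [h] at hy
  have h2 := (Set.finite_singleton p).subset (aux_support_ite a p F)
  have h3 := (Set.finite_singleton q).subset (aux_support_ite b q F)
  have h4 := (Set.finite_singleton s).subset (aux_support_ite cc s F)
  have h23 : (Function.support fun y =>
      (if y = p then a else 0) • F y + (if y = q then b else 0) • F y).Finite := by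
    refine (h2.union h3).subset ?_
    intro y hy
    by_contra h
    simp only [Set.mem_union, Function.mem_support, not_or, not_not] at h
    apply hy
    simp [Function.mem_support, h.1, h.2]
  have h234 : (Function.support fun y =>
      ((if y = p then a else 0) • F y + (if y = q then b else 0) • F y)
        - (if y = s then cc else 0) • F y).Finite := by
    refine (h23.union h4).subset ?_
    intro y hy
    by_contra h
    simp only [Set.mem_union, Function.mem_support, not_or, not_not] at h
    apply hy
    simp only [Function.mem_support, not_not]
    rw [h.1, h.2, sub_zero]
  calc ∑ᶠ y, (ξ y + ((if y = p then a else 0) + (if y = q then b else 0)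
        - (if y = s then cc else 0))) • F y
      = ∑ᶠ y, (ξ y • F y + (((if y = p then a else 0) • F y + (if y = q then b else 0) • F y)
          - (if y = s then cc else 0) • F y)) := by
        apply finsum_congr
        intro y
        rw [add_smul, sub_smul, add_smul]
    _ = (∑ᶠ y, ξ y • F y) + (a • F p + b • F q - cc • F s) := by
        rw [finsum_add_distrib h1 h234, finsum_sub_distrib h23 h4,
          finsum_add_distrib h2 h3, aux_finsum_ite_smul, aux_finsum_ite_smul,
          aux_finsum_ite_smul]

lemma aux_matrix (w r g c : ℝ) (hrc : r * c = g) :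
    (w * (1 - r)) • Matrix.vecMulVec ![1, 0] ![1, 0]
      + (w * r) • Matrix.vecMulVec ![1, -c] ![1, -c]
      - w • Matrix.vecMulVec ![1, -g] ![1, -g]
    = Matrix.diagonal ![0, w * g * (c - g)] := by
  ext i j
  fin_cases i <;> fin_cases j
  · simp [Matrix.vecMulVec_apply, Matrix.diagonal]
    ring
  · simp [Matrix.vecMulVec_apply, Matrix.diagonal]
    linear_combination (-w) * hrc
  · simp [Matrix.vecMulVec_apply, Matrix.diagonal]
    linear_combination (-w) * hrc
  · simp [Matrix.vecMulVec_apply, Matrix.diagonal]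
    linear_combination (w * c) * hrc

/-- for the one-factor marginal model `f(x) = (1, -x·e^{-θx})ᵀ` on `[0,1]`
with `θ ≥ 1`, every admissible design is supported on `{0, 1/θ}`. -/
theorem one_factor_exponential_admissible_support
    (θ : ℝ) (hθ : 1 ≤ θ)
    (f : ℝ → Fin 2 → ℝ)
    (hf : ∀ x : ℝ, f x = ![1, -x * Real.exp (-θ * x)])
    (ξ : ℝ → ℝ) (hadm : IsAdmissible (Set.Icc (0 : ℝ) 1) f ξ) :
    Function.support ξ ⊆ {0, 1 / θ} := by
  intro x₀ hx₀sup
  by_contra hmem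
  simp only [Set.mem_insert_iff, Set.mem_singleton_iff, not_or] at hmem
  obtain ⟨hx0ne, hx1ne⟩ := hmem
  obtain ⟨⟨hfin, hpos, hsub, hsum⟩, hnot⟩ := hadm
  have hθ0 : (0:ℝ) < θ := lt_of_lt_of_le one_pos hθ
  have hx01 : x₀ ∈ Set.Icc (0:ℝ) 1 := hsub hx₀sup
  have hx0pos : 0 < x₀ := lt_of_le_of_ne hx01.1 (Ne.symm hx0ne)
  set w := ξ x₀ with hwdef
  have hwpos : 0 < w := lt_of_le_of_ne (hpos x₀) (Ne.symm hx₀sup)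
  set g : ℝ := x₀ * Real.exp (-θ * x₀) with hg
  set c : ℝ := (1/θ) * Real.exp (-1) with hc
  have hcpos : 0 < c := mul_pos (by positivity) (Real.exp_pos _)
  have hgpos : 0 < g := mul_pos hx0pos (Real.exp_pos _)
  have hexp1 : -θ * (1/θ) = -1 := by field_simp
  have hgc : g < c := by
    have ht1 : θ * x₀ - 1 ≠ 0 := by
      intro h
      apply hx1ne
      rw [eq_div_iff hθ0.ne']
      linarith
    have h1 : θ * x₀ < Real.exp (θ * x₀ - 1) := by
      have := Real.add_one_lt_exp ht1
      linarith
    have h2 : θ * x₀ * Real.exp (-(θ * x₀)) < Real.exp (-1) := by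
      calc θ * x₀ * Real.exp (-(θ * x₀))
          < Real.exp (θ * x₀ - 1) * Real.exp (-(θ * x₀)) :=
            mul_lt_mul_of_pos_right h1 (Real.exp_pos _)
        _ = Real.exp (-1) := by
            rw [← Real.exp_add]; ring_nf
    have h3 : θ * g < θ * c := by
      rw [hg, hc]
      have e1 : θ * ((1/θ) * Real.exp (-1)) = Real.exp (-1) := by field_simp
      rw [e1]
      calc θ * (x₀ * Real.exp (-θ * x₀)) = θ * x₀ * Real.exp (-(θ * x₀)) := by ring_nf
        _ < Real.exp (-1) := h2
    exact lt_of_mul_lt_mul_left h3 hθ0.le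
  set r : ℝ := g / c with hr
  have hr0 : 0 < r := div_pos hgpos hcpos
  have hr1 : r < 1 := (div_lt_one hcpos).mpr hgc
  have hrc : r * c = g := div_mul_cancel₀ g hcpos.ne'
  set η : ℝ → ℝ := fun y => ξ y + ((if y = (0:ℝ) then w * (1 - r) else 0)
      + (if y = 1/θ then w * r else 0) - (if y = x₀ then w else 0)) with hη
  have hsuppη : Function.support η ⊆ Function.support ξ ∪ {(0:ℝ), 1/θ, x₀} := by
    intro y hy
    by_contra h
    simp only [Set.mem_union, Set.mem_insert_iff, Set.mem_singleton_iff, not_or,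
      Function.mem_support, not_not] at h
    obtain ⟨hξy, hy0, hy1, hyx⟩ := h
    apply hy
    show η y = 0
    simp only [hη]
    rw [if_neg hy0, if_neg hy1, if_neg hyx, hξy]
    ring
  have hdesη : IsDesign (Set.Icc (0:ℝ) 1) η := by
    refine ⟨(hfin.union (Set.toFinite _)).subset hsuppη, ?_, ?_, ?_⟩
    · intro y
      rcases eq_or_ne y x₀ with hyx | hyx
      · show (0:ℝ) ≤ η y
        simp only [hη]
        rw [hyx, if_neg hx0ne, if_neg hx1ne, if_pos rfl]
        have hz : ξ x₀ + ((0:ℝ) + 0 - w) = 0 := by rw [hwdef]; ring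
        linarith [hz]
      · show (0:ℝ) ≤ η y
        simp only [hη]
        rw [if_neg hyx, sub_zero]
        have h1 : (0:ℝ) ≤ if y = (0:ℝ) then w * (1 - r) else 0 := by
          split
          · nlinarith
          · exact le_refl 0
        have h2 : (0:ℝ) ≤ if y = 1/θ then w * r else 0 := by
          split
          · nlinarith
          · exact le_refl 0
        have h4 := hpos y
        linarith [h1, h2]
    · refine hsuppη.trans ?_
      intro y hy
      rcases hy with hy | hy
      · exact hsub hy
      · rcases hy with rfl | rfl | rfl
        · exact ⟨le_refl _, zero_le_one⟩
        · exact ⟨by positivity, by rw [div_le_one hθ0]; exact hθ⟩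
        · exact hx01
    · have key := aux_info (fun _ => (1:ℝ)) ξ hfin (w * (1 - r)) (w * r) w 0 (1/θ) x₀
      simp only [smul_eq_mul, mul_one] at key
      simp only [hη]
      rw [key, hsum]
      ring
  have hinfo : infoMatrix f η = infoMatrix f ξ +
      ((w * (1 - r)) • Matrix.vecMulVec (f 0) (f 0)
        + (w * r) • Matrix.vecMulVec (f (1/θ)) (f (1/θ))
        - w • Matrix.vecMulVec (f x₀) (f x₀)) := by
    unfold infoMatrix
    simp only [hη]
    exact aux_info (fun y => Matrix.vecMulVec (f y) (f y)) ξ hfin _ _ _ _ _ _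
  have hf0 : f 0 = ![1, 0] := by
    rw [hf]
    funext i
    fin_cases i
    · simp
    · simp
  have hfθ : f (1/θ) = ![1, -c] := by
    rw [hf]
    funext i
    fin_cases i
    · simp
    · show -(1/θ) * Real.exp (-θ * (1/θ)) = -c
      rw [hexp1, hc]
      ring
  have hfx : f x₀ = ![1, -g] := by
    rw [hf]
    funext i
    fin_cases i
    · simp
    · show -x₀ * Real.exp (-θ * x₀) = -g
      rw [hg]
      ring
  have hDeq : (w * (1 - r)) • Matrix.vecMulVec (f 0) (f 0)
        + (w * r) • Matrix.vecMulVec (f (1/θ)) (f (1/θ))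
        - w • Matrix.vecMulVec (f x₀) (f x₀)
      = Matrix.diagonal ![0, w * g * (c - g)] := by
    rw [hf0, hfθ, hfx]
    exact aux_matrix w r g c hrc
  have hdpos : 0 < w * g * (c - g) :=
    mul_pos (mul_pos hwpos hgpos) (sub_pos.mpr hgc)
  have hsubeq : infoMatrix f η - infoMatrix f ξ = Matrix.diagonal ![0, w * g * (c - g)] := by
    rw [hinfo, add_sub_cancel_left, hDeq]
  apply hnot
  refine ⟨η, hdesη, ?_, ?_⟩
  · rw [hsubeq]
    refine Matrix.posSemidef_diagonal_iff.mpr ?_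
    intro i
    fin_cases i
    · norm_num
    · show (0:ℝ) ≤ w * g * (c - g)
      exact hdpos.le
  · intro h
    have h0 : infoMatrix f η - infoMatrix f ξ = 0 := sub_eq_zero_of_eq h
    rw [hsubeq] at h0
    have h11 := congrFun (congrFun h0 1) 1
    rw [Matrix.diagonal_apply_eq, Matrix.zero_apply] at h11
    simp only [Matrix.cons_val_one, Matrix.head_cons] at h11
    exact absurd h11 hdpos.ne'
end
end

section
/- Let b₁, b₂ > 0, θ₁, θ₂ > 0 and 0 < t < θ₁b₁ + θ₂b₂, and let S = {(x₁, x₂) ∈ [0, b₁]×[0, b₂] : θ₁x₁ + θ₂x₂ = t} be a nondegenerate line segment (containing more than one point) with endpoints e and e′. Consider the model on S with regression functions f(x₁, x₂) = (1, x₁, x₂)ᵀ ∈ ℝ³. Every admissible design on S for this model is supported on the set {e, e′} of the two endpoints of the segment. -/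
open Matrix Set

noncomputable section

/-!
If a design `ξ` charges a point `z` of the open segment, write `z = a e + b e'` with `a, b > 0`
and move the mass `w = ξ z` from `z` to the endpoints, with weights `a` and `b`. Since the
regression function is affine, `f z = a f e + b f e'`, and the information matrix grows by
`w a b (f e - f e') (f e - f e')ᵀ`, a nonzero nonnegative definite matrix; so `ξ` is not
admissible.
-/

open Function

section Designs

variable {α ι : Type*}

lemma hasFiniteSupport_pi_single [DecidableEq α] {M : Type*} [Zero M] (z : α) (c : M) :
    (Pi.single z c : α → M).HasFiniteSupport :=
  (Set.finite_singleton z).subset Pi.support_single_subset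

lemma finsum_pi_single_smul [DecidableEq α] {R M : Type*} [Semiring R] [AddCommMonoid M]
    [Module R M] (z : α) (c : R) (g : α → M) : ∑ᶠ x, (Pi.single z c : α → R) x • g x = c • g z :=
  (finsum_eq_single _ z fun x hx => by simp [hx]).trans (by simp)

def transferMass [DecidableEq α] (ξ ν : α → ℝ) (z : α) : α → ℝ :=
  ξ + ξ z • (ν - Pi.single z 1)

lemma finsum_transferMass_smul [DecidableEq α] {M : Type*} [AddCommGroup M] [Module ℝ M]
    {ξ ν : α → ℝ} (hξ : ξ.HasFiniteSupport) (hν : ν.HasFiniteSupport) (z : α) (g : α → M) :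
    ∑ᶠ x, transferMass ξ ν z x • g x = ∑ᶠ x, ξ x • g x + ξ z • (∑ᶠ x, ν x • g x - g z) := by
  have hξg : (fun x => ξ x • g x).HasFiniteSupport := hξ.smul_left g
  have hνg : (fun x => ν x • g x).HasFiniteSupport := hν.smul_left g
  have hδg : (fun x => (Pi.single z 1 : α → ℝ) x • g x).HasFiniteSupport :=
    (hasFiniteSupport_pi_single z 1).smul_left g
  have hdiff : (fun x => ν x • g x - (Pi.single z 1 : α → ℝ) x • g x).HasFiniteSupport :=
    hνg.sub hδg
  have hmoved :
      (fun x => ξ z • (ν x • g x - (Pi.single z 1 : α → ℝ) x • g x)).HasFiniteSupport :=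
    hdiff.smul_right _
  simp only [transferMass, Pi.add_apply, Pi.smul_apply, Pi.sub_apply, smul_eq_mul, add_smul,
    mul_smul, sub_smul]
  rw [finsum_add_distrib hξg hmoved, ← smul_finsum' _ hdiff, finsum_sub_distrib hνg hδg,
    finsum_pi_single_smul, one_smul]

lemma infoMatrix_transferMass [Fintype ι] [DecidableEq α] (f : α → ι → ℝ) {ξ ν : α → ℝ}
    (hξ : ξ.HasFiniteSupport) (hν : ν.HasFiniteSupport) (z : α) :
    infoMatrix f (transferMass ξ ν z) =
      infoMatrix f ξ + ξ z • (infoMatrix f ν - vecMulVec (f z) (f z)) :=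
  finsum_transferMass_smul hξ hν z _

lemma IsDesign.transferMass [DecidableEq α] {X : Set α} {ξ ν : α → ℝ} (hξ : IsDesign X ξ)
    (hν : IsDesign X ν) (z : α) : IsDesign X (transferMass ξ ν z) := by
  obtain ⟨hξfin, hξpos, hξX, hξsum⟩ := hξ
  obtain ⟨hνfin, hνpos, hνX, hνsum⟩ := hν
  by_cases hz : ξ z = 0
  · simpa [_root_.transferMass, hz] using ⟨hξfin, hξpos, hξX, hξsum⟩
  refine ⟨?_, fun x => ?_, ?_, ?_⟩
  · exact HasFiniteSupport.add hξfin
      ((HasFiniteSupport.sub hνfin (hasFiniteSupport_pi_single z 1)).smul_right fun _ => ξ z)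
  · by_cases hx : x = z
    · subst hx
      simpa [_root_.transferMass, mul_sub] using mul_nonneg (hξpos x) (hνpos x)
    · simpa [_root_.transferMass, hx] using add_nonneg (hξpos x) (mul_nonneg (hξpos z) (hνpos x))
  · intro x hx
    rcases support_add _ _ hx with hx | hx
    · exact hξX hx
    rcases support_sub _ _ (support_const_smul_subset _ _ hx) with hx | hx
    · exact hνX hx
    · rw [Pi.support_single_subset hx]
      exact hξX hz
  · simpa [hξsum, hνsum] using finsum_transferMass_smul hξfin hνfin z (fun _ => (1 : ℝ))

theorem not_isAdmissible_of_posSemidef_infoMatrix_sub_vecMulVec [Fintype ι] {X : Set α}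
    {f : α → ι → ℝ} {ξ ν : α → ℝ} (hξ : IsDesign X ξ) (hν : IsDesign X ν) {z : α} (hz : ξ z ≠ 0)
    (hle : (infoMatrix f ν - vecMulVec (f z) (f z)).PosSemidef)
    (hne : infoMatrix f ν ≠ vecMulVec (f z) (f z)) : ¬ IsAdmissible X f ξ := by
  classical
  rintro ⟨-, hadm⟩
  refine hadm ⟨transferMass ξ ν z, hξ.transferMass hν z, ?_, ?_⟩ <;>
    rw [infoMatrix_transferMass f hξ.1 hν.1]
  · simpa using hle.smul (hξ.2.1 z)
  · simpa [sub_eq_zero] using ⟨hz, hne⟩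

lemma finsum_pair_smul [DecidableEq α] {R M : Type*} [Semiring R] [AddCommMonoid M] [Module R M]
    (p q : α) (a b : R) (g : α → M) :
    ∑ᶠ x, (Pi.single p a + Pi.single q b : α → R) x • g x = a • g p + b • g q := by
  have hpg : (fun x => (Pi.single p a : α → R) x • g x).HasFiniteSupport :=
    (hasFiniteSupport_pi_single p a).smul_left g
  have hqg : (fun x => (Pi.single q b : α → R) x • g x).HasFiniteSupport :=
    (hasFiniteSupport_pi_single q b).smul_left g
  simp only [Pi.add_apply, add_smul]
  rw [finsum_add_distrib hpg hqg, finsum_pi_single_smul, finsum_pi_single_smul]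

lemma isDesign_pair [DecidableEq α] {X : Set α} {p q : α} (hp : p ∈ X) (hq : q ∈ X) {a b : ℝ}
    (ha : 0 ≤ a) (hb : 0 ≤ b) (hab : a + b = 1) : IsDesign X (Pi.single p a + Pi.single q b) := by
  refine ⟨HasFiniteSupport.add (hasFiniteSupport_pi_single p a) (hasFiniteSupport_pi_single q b),
    (add_nonneg (Pi.single_nonneg.2 ha) (Pi.single_nonneg.2 hb) : (0 : α → ℝ) ≤ _),
    fun x hx => ?_, ?_⟩
  · rcases support_add _ _ hx with hx | hx
    · rwa [Pi.support_single_subset hx]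
    · rwa [Pi.support_single_subset hx]
  · simpa [hab] using finsum_pair_smul p q a b (fun _ => (1 : ℝ))

lemma infoMatrix_pair [Fintype ι] [DecidableEq α] (f : α → ι → ℝ) (p q : α) (a b : ℝ) :
    infoMatrix f (Pi.single p a + Pi.single q b) =
      a • vecMulVec (f p) (f p) + b • vecMulVec (f q) (f q) :=
  finsum_pair_smul p q a b _

lemma vecMulVec_add_smul_vecMulVec_sub {R n : Type*} [CommRing R] {a b : R} (hab : a + b = 1)
    (u v : n → R) :
    vecMulVec (a • u + b • v) (a • u + b • v) + (a * b) • vecMulVec (u - v) (u - v) =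
      a • vecMulVec u u + b • vecMulVec v v := by
  obtain rfl : b = 1 - a := eq_sub_of_add_eq' hab
  ext i j
  simp only [Matrix.add_apply, Matrix.smul_apply, vecMulVec_apply, Pi.add_apply, Pi.sub_apply,
    Pi.smul_apply, smul_eq_mul]
  ring

theorem not_isAdmissible_of_mem_openSegment [Fintype ι] {X : Set α} {f : α → ι → ℝ}
    {ξ : α → ℝ} (hξ : IsDesign X ξ) {z p q : α} (hz : ξ z ≠ 0) (hp : p ∈ X) (hq : q ∈ X)
    (hpq : f p ≠ f q) (hfz : f z ∈ openSegment ℝ (f p) (f q)) : ¬ IsAdmissible X f ξ := by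
  classical
  obtain ⟨a, b, ha, hb, hab, hfz⟩ := hfz
  have hgap := vecMulVec_add_smul_vecMulVec_sub hab (f p) (f q)
  rw [hfz, ← infoMatrix_pair] at hgap
  refine not_isAdmissible_of_posSemidef_infoMatrix_sub_vecMulVec hξ
    (isDesign_pair hp hq ha.le hb.le hab) hz ?_ ?_ <;> rw [← hgap]
  · simpa using (posSemidef_vecMulVec_self_star (f p - f q)).smul (mul_pos ha hb).le
  · simpa [sub_eq_zero, ha.ne', hb.ne'] using hpq

end Designs

lemma vec_one_fst_snd_injective : Injective fun x : ℝ × ℝ => ![1, x.1, x.2] := by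
  intro x y h
  exact Prod.ext (congrFun h 1) (congrFun h 2)

lemma vec_one_fst_snd_mem_openSegment {x y z : ℝ × ℝ} (h : z ∈ openSegment ℝ x y) :
    ![1, z.1, z.2] ∈ openSegment ℝ ![1, x.1, x.2] ![1, y.1, y.2] := by
  obtain ⟨a, b, ha, hb, hab, rfl⟩ := h
  refine ⟨a, b, ha, hb, hab, ?_⟩
  ext i
  fin_cases i <;> simp [hab]

theorem segment_linear_model_admissible_support_general
    (S : Set (ℝ × ℝ))
    (e e' : ℝ × ℝ) (hseg : S = segment ℝ e e')
    (f : ℝ × ℝ → Fin 3 → ℝ) (hf : ∀ x : ℝ × ℝ, f x = ![1, x.1, x.2])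
    (ξ : ℝ × ℝ → ℝ) (hadm : IsAdmissible S f ξ) :
    Function.support ξ ⊆ {e, e'} := by
  obtain rfl : f = fun x => ![1, x.1, x.2] := funext hf
  subst hseg
  intro z hz
  by_contra hze
  simp only [mem_insert_iff, mem_singleton_iff, not_or] at hze
  have hz_seg : z ∈ segment ℝ e e' := hadm.1.2.2.1 hz
  have hz_open : z ∈ openSegment ℝ e e' :=
    mem_openSegment_of_ne_left_right (Ne.symm hze.1) (Ne.symm hze.2) hz_seg
  have hee' : e ≠ e' := by
    rintro rfl
    exact hze.1 (by simpa [openSegment_same] using hz_open)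
  exact not_isAdmissible_of_mem_openSegment hadm.1 hz (left_mem_segment ℝ e e')
    (right_mem_segment ℝ e e') (vec_one_fst_snd_injective.ne hee')
    (vec_one_fst_snd_mem_openSegment hz_open) hadm

/-- for the linear model `f(x₁,x₂) = (1, x₁, x₂)ᵀ` on a nondegenerate line
segment `S = {x ∈ [0,b₁]×[0,b₂] : θ₁x₁ + θ₂x₂ = t}` with endpoints `e` and `e'`, every
admissible design on `S` is supported on `{e, e'}`. -/
theorem segment_linear_model_admissible_support
    (b₁ b₂ θ₁ θ₂ t : ℝ) (hb₁ : 0 < b₁) (hb₂ : 0 < b₂)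
    (hθ₁ : 0 < θ₁) (hθ₂ : 0 < θ₂) (ht₀ : 0 < t) (ht₁ : t < θ₁ * b₁ + θ₂ * b₂)
    (S : Set (ℝ × ℝ))
    (hS : S = {x : ℝ × ℝ | x ∈ Set.Icc (0 : ℝ) b₁ ×ˢ Set.Icc (0 : ℝ) b₂ ∧
      θ₁ * x.1 + θ₂ * x.2 = t})
    (e e' : ℝ × ℝ) (he : e ∈ S) (he' : e' ∈ S) (hne : e ≠ e')
    (hseg : S = segment ℝ e e')
    (f : ℝ × ℝ → Fin 3 → ℝ) (hf : ∀ x : ℝ × ℝ, f x = ![1, x.1, x.2])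
    (ξ : ℝ × ℝ → ℝ) (hadm : IsAdmissible S f ξ) :
    Function.support ξ ⊆ {e, e'} :=
  segment_linear_model_admissible_support_general S e e' hseg f hf ξ hadm
end
end

section
/- Let θ₀, θ₁, θ₂ > 0 and b₁, b₂ > 0, and consider the two-factor exponential model on X = [0, b₁]×[0, b₂] with gradient regression functions f(x₁, x₂) = e^{θ₁x₁+θ₂x₂}·(1, θ₀x₁, θ₀x₂)ᵀ ∈ ℝ³. Every admissible design on X for this model is supported on the boundary of the rectangle [0, b₁]×[0, b₂]. -/
open Matrix Set

noncomputable section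

/-! If `x` is an interior support point, move along `d = (θ₂, -θ₁)`: the exponent
`θ₁ x₁ + θ₂ x₂` is constant on that line, so `f` is affine there and `f x` is the midpoint of
`f (x + t d)` and `f (x - t d)`, both points lying in the rectangle for small `t > 0`. Splitting
the weight of `x` equally between them adds `(ξ x / 4) v vᵀ`, with
`v = f (x + t d) - f (x - t d) ≠ 0`, to the information matrix, contradicting admissibility. -/

open Function Filter Topology

section Splitting

variable {α : Type*} [DecidableEq α]

lemma Set.Finite.support_add_single {ξ : α → ℝ} (hξ : (support ξ).Finite) (x : α) (c : ℝ) :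
    (support (ξ + Pi.single x c)).Finite :=
  (hξ.union (finite_singleton x)).subset
    ((support_add ξ _).trans (union_subset_union_right _ Pi.support_single_subset))

lemma finsum_add_single_smul {M : Type*} [AddCommMonoid M] [Module ℝ M] {ξ : α → ℝ}
    (hξ : (support ξ).Finite) (x : α) (c : ℝ) (g : α → M) :
    ∑ᶠ y, (ξ + Pi.single x c : α → ℝ) y • g y = ∑ᶠ y, ξ y • g y + c • g x := by
  have hsmul : (support fun y => ξ y • g y).Finite := hξ.subset (support_smul_subset_left ξ g)
  have hsingle : (support fun y => (Pi.single x c : α → ℝ) y • g y).Finite :=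
    (finite_singleton x).subset
      ((support_smul_subset_left (Pi.single x c) g).trans Pi.support_single_subset)
  simp only [Pi.add_apply, add_smul]
  rw [finsum_add_distrib hsmul hsingle,
    finsum_eq_single (fun y => (Pi.single x c : α → ℝ) y • g y) x fun y hy => by simp [hy],
    Pi.single_eq_same]

def splitDesign (ξ : α → ℝ) (x p q : α) : α → ℝ :=
  ξ + Pi.single x (-ξ x) + Pi.single p (ξ x / 2) + Pi.single q (ξ x / 2)

lemma finsum_splitDesign_smul {M : Type*} [AddCommMonoid M] [Module ℝ M] {ξ : α → ℝ}
    (hξ : (support ξ).Finite) (x p q : α) (g : α → M) :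
    ∑ᶠ y, splitDesign ξ x p q y • g y
      = ∑ᶠ y, ξ y • g y + (-ξ x) • g x + (ξ x / 2) • g p + (ξ x / 2) • g q := by
  have h₁ := hξ.support_add_single x (-ξ x)
  rw [splitDesign, finsum_add_single_smul (h₁.support_add_single _ _),
    finsum_add_single_smul h₁, finsum_add_single_smul hξ]

lemma IsDesign.splitDesign {X : Set α} {ξ : α → ℝ} (hξ : IsDesign X ξ) {x p q : α}
    (hx : x ∈ X) (hp : p ∈ X) (hq : q ∈ X) : IsDesign X (splitDesign ξ x p q) := by
  obtain ⟨hfin, hnonneg, hsupp, hsum⟩ := hξ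
  refine ⟨?_, fun y => ?_, ?_, ?_⟩
  · exact ((hfin.support_add_single _ _).support_add_single _ _).support_add_single _ _
  · have hx₀ := hnonneg x
    simp only [_root_.splitDesign, Pi.add_apply, Pi.single_apply]
    rcases eq_or_ne y x with rfl | hyx
    · simp only [if_true]
      split_ifs <;> linarith
    · simp only [hyx, if_false]
      split_ifs <;> linarith [hnonneg y]
  · intro y hy
    by_contra hyX
    have hξy : ξ y = 0 := notMem_support.1 fun h => hyX (hsupp h)
    have hyx : y ≠ x := fun h => hyX (h ▸ hx)
    have hyp : y ≠ p := fun h => hyX (h ▸ hp)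
    have hyq : y ≠ q := fun h => hyX (h ▸ hq)
    exact hy (by simp [_root_.splitDesign, hξy, hyx, hyp, hyq])
  · have h := finsum_splitDesign_smul hfin x p q fun _ => (1 : ℝ)
    simp only [smul_eq_mul, mul_one] at h
    rw [h, hsum]
    ring

variable {ι : Type*} [Fintype ι] {f : α → ι → ℝ}

lemma infoMatrix_splitDesign {ξ : α → ℝ} (hξ : (support ξ).Finite) {x p q : α}
    (hmid : f x = midpoint ℝ (f p) (f q)) :
    infoMatrix f (splitDesign ξ x p q)
      = infoMatrix f ξ + (ξ x / 4) • vecMulVec (f p - f q) (f p - f q) := by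
  rw [infoMatrix, infoMatrix, finsum_splitDesign_smul hξ, hmid, midpoint_eq_smul_add]
  ext i j
  simp only [Matrix.add_apply, Matrix.smul_apply, vecMulVec_apply, Pi.smul_apply, Pi.add_apply,
    Pi.sub_apply, smul_eq_mul, invOf_eq_inv]
  ring

theorem IsAdmissible.eq_of_apply_eq_midpoint {X : Set α} {ξ : α → ℝ}
    (hξ : IsAdmissible X f ξ) {x p q : α} (hx : x ∈ support ξ) (hp : p ∈ X) (hq : q ∈ X)
    (hmid : f x = midpoint ℝ (f p) (f q)) : f p = f q := by
  obtain ⟨hdesign, hmax⟩ := hξ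
  by_contra hpq
  have hpos : 0 < ξ x := (hdesign.2.1 x).lt_of_ne' hx
  refine hmax ⟨splitDesign ξ x p q, hdesign.splitDesign (hdesign.2.2.1 hx) hp hq, ?_, ?_⟩ <;>
    rw [infoMatrix_splitDesign hdesign.1 hmid]
  · rw [add_sub_cancel_left]
    exact PosSemidef.smul (by simpa using posSemidef_vecMulVec_self_star (f p - f q))
      (by positivity)
  · rw [Ne, add_eq_left, smul_eq_zero, vecMulVec_eq_zero, sub_eq_zero]
    simp [hpos.ne', hpq]

end Splitting

lemma exists_pos_add_smul_mem_and_sub_smul_mem {E : Type*} [AddCommGroup E] [TopologicalSpace E]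
    [IsTopologicalAddGroup E] [Module ℝ E] [ContinuousSMul ℝ E] {s : Set E} {x : E}
    (hx : x ∈ interior s) (d : E) : ∃ t : ℝ, 0 < t ∧ x + t • d ∈ s ∧ x - t • d ∈ s := by
  have hs : s ∈ 𝓝 x := mem_interior_iff_mem_nhds.1 hx
  have hadd : ∀ᶠ t : ℝ in 𝓝 0, x + t • d ∈ s :=
    (Continuous.tendsto' (by fun_prop) 0 x (by simp)).eventually hs
  have hsub : ∀ᶠ t : ℝ in 𝓝 0, x - t • d ∈ s :=
    (Continuous.tendsto' (by fun_prop) 0 x (by simp)).eventually hs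
  exact (hadd.and hsub).exists_gt

def twoFactorExp (θ₀ θ₁ θ₂ : ℝ) (x : ℝ × ℝ) : Fin 3 → ℝ :=
  Real.exp (θ₁ * x.1 + θ₂ * x.2) • ![1, θ₀ * x.1, θ₀ * x.2]

lemma twoFactorExp_injective {θ₀ : ℝ} (hθ₀ : θ₀ ≠ 0) (θ₁ θ₂ : ℝ) :
    Injective (twoFactorExp θ₀ θ₁ θ₂) := by
  intro y z h
  have h₀ := congrFun h 0
  have h₁ := congrFun h 1
  have h₂ := congrFun h 2
  simp only [twoFactorExp, Pi.smul_apply, smul_eq_mul, Matrix.cons_val_zero, Matrix.cons_val_one,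
    Matrix.cons_val_two, mul_one] at h₀ h₁ h₂
  rw [h₀] at h₁ h₂
  have hE := Real.exp_pos (θ₁ * z.1 + θ₂ * z.2)
  ext
  · exact mul_left_cancel₀ hθ₀ (mul_left_cancel₀ hE.ne' h₁)
  · exact mul_left_cancel₀ hθ₀ (mul_left_cancel₀ hE.ne' h₂)

lemma twoFactorExp_eq_midpoint (θ₀ θ₁ θ₂ : ℝ) (x : ℝ × ℝ) {d : ℝ × ℝ}
    (hd : θ₁ * d.1 + θ₂ * d.2 = 0) :
    twoFactorExp θ₀ θ₁ θ₂ x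
      = midpoint ℝ (twoFactorExp θ₀ θ₁ θ₂ (x + d)) (twoFactorExp θ₀ θ₁ θ₂ (x - d)) := by
  have hadd : θ₁ * (x + d).1 + θ₂ * (x + d).2 = θ₁ * x.1 + θ₂ * x.2 := by
    simp only [Prod.fst_add, Prod.snd_add]; linear_combination hd
  have hsub : θ₁ * (x - d).1 + θ₂ * (x - d).2 = θ₁ * x.1 + θ₂ * x.2 := by
    simp only [Prod.fst_sub, Prod.snd_sub]; linear_combination -hd
  rw [twoFactorExp, twoFactorExp, twoFactorExp, hadd, hsub, midpoint_eq_smul_add, ← smul_add,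
    smul_comm]
  congr 1
  ext i
  fin_cases i <;> simp [invOf_eq_inv] <;> ring

theorem two_factor_exponential_admissible_boundary_general
    (θ₀ θ₁ θ₂ b₁ b₂ : ℝ) (hθ₀ : 0 < θ₀) (hθ₂ : 0 < θ₂)
    (f : ℝ × ℝ → Fin 3 → ℝ)
    (hf : ∀ x : ℝ × ℝ,
      f x = Real.exp (θ₁ * x.1 + θ₂ * x.2) • ![1, θ₀ * x.1, θ₀ * x.2])
    (ξ : ℝ × ℝ → ℝ)
    (hadm : IsAdmissible (Set.Icc (0 : ℝ) b₁ ×ˢ Set.Icc (0 : ℝ) b₂) f ξ) :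
    Function.support ξ ⊆
      {x : ℝ × ℝ | x ∈ Set.Icc (0 : ℝ) b₁ ×ˢ Set.Icc (0 : ℝ) b₂ ∧
        (x.1 = 0 ∨ x.1 = b₁ ∨ x.2 = 0 ∨ x.2 = b₂)} := by
  obtain rfl : f = twoFactorExp θ₀ θ₁ θ₂ := funext hf
  intro x hx
  have hxX := hadm.1.2.2.1 hx
  refine ⟨hxX, ?_⟩
  by_contra! hbd
  have hint : x ∈ interior (Icc 0 b₁ ×ˢ Icc 0 b₂) := by
    rw [interior_prod_eq, interior_Icc, interior_Icc]
    exact ⟨⟨hxX.1.1.lt_of_ne' hbd.1, hxX.1.2.lt_of_ne hbd.2.1⟩,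
      hxX.2.1.lt_of_ne' hbd.2.2.1, hxX.2.2.lt_of_ne hbd.2.2.2⟩
  obtain ⟨t, ht, hp, hq⟩ := exists_pos_add_smul_mem_and_sub_smul_mem hint (θ₂, -θ₁)
  have hmid := twoFactorExp_eq_midpoint θ₀ θ₁ θ₂ x (d := t • (θ₂, -θ₁))
    (by simp only [Prod.smul_mk, smul_eq_mul]; ring)
  have heq := twoFactorExp_injective hθ₀.ne' θ₁ θ₂ (hadm.eq_of_apply_eq_midpoint hx hp hq hmid)
  have heq₁ : x.1 + t * θ₂ = x.1 - t * θ₂ := by simpa using congrArg Prod.fst heq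
  linarith [mul_pos ht hθ₂]

/-- for the two-factor exponential model with gradient
`f(x₁,x₂) = e^{θ₁x₁+θ₂x₂}(1, θ₀x₁, θ₀x₂)ᵀ` on `[0,b₁]×[0,b₂]`, every admissible design is
supported on the boundary of the rectangle. -/
theorem two_factor_exponential_admissible_boundary
    (θ₀ θ₁ θ₂ b₁ b₂ : ℝ) (hθ₀ : 0 < θ₀) (hθ₁ : 0 < θ₁) (hθ₂ : 0 < θ₂)
    (hb₁ : 0 < b₁) (hb₂ : 0 < b₂)
    (f : ℝ × ℝ → Fin 3 → ℝ)
    (hf : ∀ x : ℝ × ℝ,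
      f x = Real.exp (θ₁ * x.1 + θ₂ * x.2) • ![1, θ₀ * x.1, θ₀ * x.2])
    (ξ : ℝ × ℝ → ℝ)
    (hadm : IsAdmissible (Set.Icc (0 : ℝ) b₁ ×ˢ Set.Icc (0 : ℝ) b₂) f ξ) :
    Function.support ξ ⊆
      {x : ℝ × ℝ | x ∈ Set.Icc (0 : ℝ) b₁ ×ˢ Set.Icc (0 : ℝ) b₂ ∧
        (x.1 = 0 ∨ x.1 = b₁ ∨ x.2 = 0 ∨ x.2 = b₂)} :=
  two_factor_exponential_admissible_boundary_general θ₀ θ₁ θ₂ b₁ b₂ hθ₀ hθ₂ f hf ξ hadm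
end
end
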